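/- The number of full binary trees with n leaves avoiding the left comb pattern with m leaves equals the number of Dyck words of semilength n-1 avoiding the contiguous subword 0^(m-1), for all n ≥ 1 and m ≥ 2. -/

import Mathlib

inductive BTree : Type
  | leaf : BTree
  | node : BTree → BTree → BTree
  deriving DecidableEq

namespace BTree

def leaves : BTree → ℕ
  | leaf => 1
  | node l r => leaves l + leaves r

def Matches : BTree → BTree → Bool
  | _, leaf => true
  | leaf, node _ _ => false
  | node l r, node tl tr => Matches l tl && Matches r tr

def Contains : BTree → BTree → Bool
  | leaf, t => Matches leaf t
  | node l r, t => Matches (node l r) t || Contains l t || Contains r t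

def Avoids (T t : BTree) : Prop := Contains T t = false

end BTree

namespace BTree

def leftComb : ℕ → BTree
  | 0 => leaf
  | 1 => leaf
  | n + 2 => node (leftComb (n + 1)) leaf

end BTree

/-- `w` is a Dyck word of semilength `k` (`false` = 0 = down/open, `true` = 1 = up/close). -/
def IsDyckWord (k : ℕ) (w : List Bool) : Prop :=
  w.length = 2 * k ∧ w.count false = k ∧
    ∀ p : List Bool, p <+: w → p.count true ≤ p.count false

/-!
Write a full binary tree in preorder, emitting `0` on entering an internal node and `1` on
passing from its left to its right subtree. This is Mathlib's bijection `DyckWord.equivTree`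
between trees with `n` leaves (so `n - 1` internal nodes) and Dyck words of semilength `n - 1`,
read over `Bool`. A factor `0^k` starting at a node is a chain of `k` internal nodes along the left
spine of the subtree there, i.e. an occurrence of the left comb with `k + 1` leaves, so the
bijection restricts to `leftComb m`-avoiding trees and `0^(m-1)`-avoiding words.
-/

open List
open DyckStep (U D)

namespace List

variable {α : Type*} {s A B : List α} {b : α}

lemma prefix_append_cons_iff_of_notMem (hb : b ∉ s) : s <+: A ++ b :: B ↔ s <+: A := by
  induction A generalizing s with
  | nil =>
    rcases s with _ | ⟨c, s⟩
    · simp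
    · simp only [nil_append, cons_prefix_cons, prefix_nil, reduceCtorEq, iff_false, not_and]
      rintro rfl
      exact absurd mem_cons_self hb
  | cons a A ih =>
    rcases s with _ | ⟨c, s⟩
    · simp
    · simpa using fun _ => ih (mt (mem_cons_of_mem c) hb)

lemma infix_append_cons_iff_of_notMem (hb : b ∉ s) :
    s <:+: A ++ b :: B ↔ s <:+: A ∨ s <:+: B := by
  induction A with
  | nil =>
    rw [nil_append, infix_cons_iff, ← nil_append (b :: B), prefix_append_cons_iff_of_notMem hb]
    simp only [prefix_nil, infix_nil]
  | cons a A ih =>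
    rw [cons_append, infix_cons_iff, ← cons_append, prefix_append_cons_iff_of_notMem hb, ih,
      infix_cons_iff (l₂ := A)]
    tauto

end List

namespace DyckStep

def toBool : DyckStep → Bool
  | U => false
  | D => true

def ofBool : Bool → DyckStep
  | false => U
  | true => D

lemma toBool_injective : Function.Injective toBool := by
  intro a b; cases a <;> cases b <;> simp [toBool]

lemma ofBool_injective : Function.Injective ofBool := by
  intro a b; cases a <;> cases b <;> simp [ofBool]

@[simp] lemma toBool_comp_ofBool : toBool ∘ ofBool = id := by
  funext b; cases b <;> rfl

@[simp] lemma count_false_map_toBool (l : List DyckStep) :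
    (l.map toBool).count false = l.count U :=
  count_map_of_injective l toBool toBool_injective U

@[simp] lemma count_true_map_toBool (l : List DyckStep) :
    (l.map toBool).count true = l.count D :=
  count_map_of_injective l toBool toBool_injective D

@[simp] lemma count_U_map_ofBool (l : List Bool) : (l.map ofBool).count U = l.count false :=
  count_map_of_injective l ofBool ofBool_injective false

@[simp] lemma count_D_map_ofBool (l : List Bool) : (l.map ofBool).count D = l.count true :=
  count_map_of_injective l ofBool ofBool_injective true

end DyckStep

lemma isDyckWord_iff_exists_dyckWord {k : ℕ} {w : List Bool} :
    IsDyckWord k w ↔ ∃ p : DyckWord, p.semilength = k ∧ p.toList.map DyckStep.toBool = w := by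
  constructor
  · rintro ⟨hlen, hfalse, hprefix⟩
    have htrue : w.count true = k := by have := count_true_add_count_false w; omega
    refine ⟨⟨w.map DyckStep.ofBool, by simp [htrue, hfalse], fun i => ?_⟩, ?_, by simp⟩
    · simpa [← map_take] using hprefix _ (take_prefix i w)
    · simpa [DyckWord.semilength] using hfalse
  · rintro ⟨p, rfl, rfl⟩
    refine ⟨by rw [length_map, p.two_mul_semilength_eq_length],
      by simp [DyckWord.semilength], ?_⟩
    intro q hq
    rw [prefix_iff_eq_take, ← map_take] at hq
    rw [hq, DyckStep.count_true_map_toBool, DyckStep.count_false_map_toBool]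
    exact p.count_D_le_count_U q.length

namespace BTree

def toBinaryTree : BTree → BinaryTree Unit
  | leaf => .nil
  | node l r => .node () l.toBinaryTree r.toBinaryTree

def ofBinaryTree : BinaryTree Unit → BTree
  | .nil => leaf
  | .node _ l r => node (ofBinaryTree l) (ofBinaryTree r)

def equivBinaryTree : BTree ≃ BinaryTree Unit where
  toFun := toBinaryTree
  invFun := ofBinaryTree
  left_inv T := by induction T <;> simp_all [toBinaryTree, ofBinaryTree]
  right_inv t := by induction t <;> simp_all [toBinaryTree, ofBinaryTree]

@[simp] lemma numLeaves_toBinaryTree (T : BTree) : T.toBinaryTree.numLeaves = T.leaves := by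
  induction T <;> simp_all [toBinaryTree, leaves]

def toWord : BTree → List Bool
  | leaf => []
  | node l r => false :: (l.toWord ++ true :: r.toWord)

lemma toWord_eq_map_ofTree (T : BTree) :
    T.toWord = (DyckWord.ofTree T.toBinaryTree).toList.map DyckStep.toBool := by
  induction T with
  | leaf => rfl
  | node l r ihl ihr =>
    change _ = map _ ([U] ++ _ ++ [D] ++ _)
    simp [toWord, ihl, ihr, DyckStep.toBool]

lemma isDyckWord_toWord (T : BTree) : IsDyckWord (T.leaves - 1) T.toWord := by
  refine isDyckWord_iff_exists_dyckWord.2 ⟨_, ?_, (toWord_eq_map_ofTree T).symm⟩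
  rw [← DyckWord.numNodes_toTree, DyckWord.toTree_ofTree, ← numLeaves_toBinaryTree,
    BinaryTree.numLeaves_eq_numNodes_succ, Nat.add_sub_cancel]

lemma toWord_injective : Function.Injective toWord := by
  intro T T' h
  rw [toWord_eq_map_ofTree, toWord_eq_map_ofTree] at h
  exact equivBinaryTree.injective <| DyckWord.equivTree.symm.injective <| DyckWord.ext <|
    map_injective_iff.2 DyckStep.toBool_injective h

lemma exists_toWord_eq_of_isDyckWord {k : ℕ} {w : List Bool} (hw : IsDyckWord k w) :
    ∃ T : BTree, T.leaves = k + 1 ∧ T.toWord = w := by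
  obtain ⟨p, rfl, rfl⟩ := isDyckWord_iff_exists_dyckWord.1 hw
  set T := equivBinaryTree.symm p.toTree
  have hT : T.toBinaryTree = p.toTree := equivBinaryTree.apply_symm_apply _
  refine ⟨T, ?_, ?_⟩
  · rw [← numLeaves_toBinaryTree, hT, BinaryTree.numLeaves_eq_numNodes_succ,
      DyckWord.numNodes_toTree]
  · rw [toWord_eq_map_ofTree, hT, DyckWord.ofTree_toTree]

@[simp] lemma matches_leaf (T : BTree) : T.Matches leaf = true := by
  cases T <;> rfl

lemma matches_leftComb_iff (k : ℕ) (T : BTree) :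
    T.Matches (leftComb (k + 1)) = true ↔ replicate k false <+: T.toWord := by
  induction k generalizing T with
  | zero => simp [leftComb]
  | succ k ih =>
    cases T with
    | leaf => simp [leftComb, Matches, toWord]
    | node l r =>
      rw [leftComb, toWord, replicate_succ, cons_prefix_cons,
        prefix_append_cons_iff_of_notMem (by simp), ← ih]
      simp [Matches]

lemma contains_leftComb_iff (m : ℕ) (T : BTree) :
    T.Contains (leftComb m) = true ↔ replicate (m - 1) false <:+: T.toWord := by
  -- `leftComb 0 = leftComb 1 = leaf`
  obtain ⟨k, hm, hk⟩ : ∃ k, leftComb m = leftComb (k + 1) ∧ m - 1 = k := by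
    rcases m with _ | k <;> exact ⟨_, rfl, rfl⟩
  rw [hm, hk]
  induction T with
  | leaf => simp [Contains, matches_leftComb_iff, toWord]
  | node l r ihl ihr =>
    rw [Contains, toWord, infix_cons_iff, infix_append_cons_iff_of_notMem (by simp),
      ← toWord, ← matches_leftComb_iff, ← ihl, ← ihr]
    simp only [Bool.or_eq_true, or_assoc]

lemma avoids_leftComb_iff (m : ℕ) (T : BTree) :
    T.Avoids (leftComb m) ↔ ¬ replicate (m - 1) false <:+: T.toWord := by
  rw [Avoids, ← contains_leftComb_iff, Bool.not_eq_true]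

end BTree

theorem stmt_17_general (n m : ℕ) (hn : 1 ≤ n) :
    Nat.card {T : BTree // T.leaves = n ∧ T.Avoids (BTree.leftComb m)} =
      Nat.card {w : List Bool // IsDyckWord (n - 1) w ∧
        ¬ (List.replicate (m - 1) false) <:+: w} := by
  refine Nat.card_eq_of_bijective (fun T => ⟨T.1.toWord,
      by simpa only [T.2.1] using T.1.isDyckWord_toWord,
      (T.1.avoids_leftComb_iff m).1 T.2.2⟩) ⟨?_, ?_⟩
  · intro T T' h
    exact Subtype.ext (BTree.toWord_injective (congrArg Subtype.val h))
  · rintro ⟨w, hw, hpat⟩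
    obtain ⟨T, hleaves, rfl⟩ := BTree.exists_toWord_eq_of_isDyckWord hw
    exact ⟨⟨T, by omega, (T.avoids_leftComb_iff m).2 hpat⟩, rfl⟩

theorem stmt_17 (n m : ℕ) (hn : 1 ≤ n) (hm : 2 ≤ m) :
    Nat.card {T : BTree // T.leaves = n ∧ T.Avoids (BTree.leftComb m)} =
      Nat.card {w : List Bool // IsDyckWord (n - 1) w ∧
        ¬ (List.replicate (m - 1) false) <:+: w} :=
  stmt_17_general n m hn
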